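/- (Inconsistency of the constant-effect DMLATEIV estimand under effect and compliance heterogeneity.) Suppose E[β0(X)] ≠ 0. If a constant θ̂ ∈ ℝ satisfies the unconditional moment equation E[(Y − q0(X) − θ̂·(T − p0(X)))·(Z − r0(X))] = 0, then θ̂ = E[θ0(X)·β0(X)] / E[β0(X)]; i.e., the constant estimand is the compliance-weighted average of the heterogeneous effect θ0, which differs from E[θ0(X)] whenever θ0(X) and β0(X) are correlated. -/

import Mathlib

/-!
Write `D = T - p0(X)` and `W = Z - r0(X)` for the treatment and instrument residuals and
`R = Y - θ0(X)·T - f0(X)` for the structural residual. Pointwise,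
`Y - q0(X) - θ̂·D = R + (θ0(X) - θ̂)·D + (θ0(X)·p0(X) + f0(X) - q0(X))`.
Against `W`, the structural residual integrates to zero because `W` is a function of `(Z, X)`
and `E[R | Z, X] = 0`; every function of `X` integrates to zero because `E[W | X] = 0`; and
`(θ0(X) - θ̂)·D·W` integrates to `E[(θ0(X) - θ̂)·β0(X)]` by the tower property. So the moment
equation reads `E[θ0(X)·β0(X)] - θ̂·E[β0(X)] = 0`.
-/

open MeasureTheory

section CondExp

variable {Ω : Type*} {m mΩ : MeasurableSpace Ω} {μ : Measure Ω}

theorem memLp_top_of_abs_le {f : Ω → ℝ} (hf : Measurable f) (hb : ∃ C, ∀ ω, |f ω| ≤ C) :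
    MemLp f ⊤ μ := by
  obtain ⟨C, hC⟩ := hb
  exact memLp_top_of_bound hf.aestronglyMeasurable C (ae_of_all _ fun ω => hC ω)

theorem memLp_top_comp_of_abs_le {𝓧 : Type*} [MeasurableSpace 𝓧] {X : Ω → 𝓧} {c : 𝓧 → ℝ}
    (hc : Measurable c) (hX : Measurable X) (hb : ∃ C, ∀ x, |c x| ≤ C) :
    MemLp (fun ω => c (X ω)) ⊤ μ := by
  obtain ⟨C, hC⟩ := hb
  exact memLp_top_of_abs_le (hc.comp hX) ⟨C, fun ω => hC (X ω)⟩

theorem integral_mul_eq_integral_mul_condExp (hm : m ≤ mΩ) [SigmaFinite (μ.trim hm)]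
    {f g : Ω → ℝ} (hg : StronglyMeasurable[m] g) (hgf : Integrable (g * f) μ)
    (hf : Integrable f μ) :
    ∫ ω, g ω * f ω ∂μ = ∫ ω, g ω * μ[f|m] ω ∂μ :=
  (integral_condExp hm).symm.trans
    (integral_congr_ae (condExp_mul_of_stronglyMeasurable_left hg hgf hf))

theorem integral_mul_eq_zero_of_condExp_ae_eq_zero (hm : m ≤ mΩ) [SigmaFinite (μ.trim hm)]
    {f g : Ω → ℝ} (hg : StronglyMeasurable[m] g) (hgf : Integrable (g * f) μ)
    (hf : Integrable f μ) (hf0 : μ[f|m] =ᵐ[μ] 0) :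
    ∫ ω, g ω * f ω ∂μ = 0 := by
  rw [integral_mul_eq_integral_mul_condExp hm hg hgf hf]
  refine integral_eq_zero_of_ae ?_
  filter_upwards [hf0] with ω hω
  simp [hω]

theorem condExp_sub_ae_eq_zero_of_ae_eq_condExp (hm : m ≤ mΩ) [SigmaFinite (μ.trim hm)]
    {f h : Ω → ℝ} (hh : StronglyMeasurable[m] h) (hf : Integrable f μ) (hhi : Integrable h μ)
    (hfh : h =ᵐ[μ] μ[f|m]) :
    μ[f - h|m] =ᵐ[μ] 0 := by
  filter_upwards [condExp_sub hf hhi m, hfh] with ω hsub hω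
  rw [hsub, condExp_of_stronglyMeasurable hm hh hhi, Pi.sub_apply, hω, sub_self, Pi.zero_apply]

end CondExp

section PartiallyLinearIV

variable {Ω : Type*} {m m' mΩ : MeasurableSpace Ω} {μ : Measure Ω} [IsFiniteMeasure μ]

theorem integral_add_mul_add_mul_eq_integral_mul (hm : m ≤ m') (hm' : m' ≤ mΩ)
    {R D W a b β : Ω → ℝ} (hR : MemLp R ⊤ μ) (hD : MemLp D ⊤ μ) (hW : MemLp W ⊤ μ)
    (ha : StronglyMeasurable[m] a) (ha' : MemLp a ⊤ μ)
    (hb : StronglyMeasurable[m] b) (hb' : MemLp b ⊤ μ)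
    (hWm : StronglyMeasurable[m'] W) (hWc : μ[W|m] =ᵐ[μ] 0) (hRc : μ[R|m'] =ᵐ[μ] 0)
    (hβ : β =ᵐ[μ] μ[fun ω => D ω * W ω|m]) :
    ∫ ω, (R ω + a ω * D ω + b ω) * W ω ∂μ = ∫ ω, a ω * β ω ∂μ := by
  have hmΩ : m ≤ mΩ := hm.trans hm'
  have hDW : MemLp (fun ω => D ω * W ω) ⊤ μ := hW.mul' hD
  have hWR : MemLp (fun ω => W ω * R ω) ⊤ μ := hR.mul' hW
  have haDW : MemLp (fun ω => a ω * (D ω * W ω)) ⊤ μ := hDW.mul' ha'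
  have hbW : MemLp (fun ω => b ω * W ω) ⊤ μ := hW.mul' hb'
  have hsplit : ∫ ω, (R ω + a ω * D ω + b ω) * W ω ∂μ
      = ∫ ω, W ω * R ω ∂μ + ∫ ω, a ω * (D ω * W ω) ∂μ + ∫ ω, b ω * W ω ∂μ := by
    have hpointwise : (fun ω => (R ω + a ω * D ω + b ω) * W ω)
        = fun ω => (W ω * R ω + a ω * (D ω * W ω)) + b ω * W ω := by
      ext ω
      ring
    have hsum : Integrable (fun ω => W ω * R ω + a ω * (D ω * W ω)) μ :=
      (hWR.integrable le_top).add (haDW.integrable le_top)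
    rw [hpointwise, integral_add hsum (hbW.integrable le_top),
      integral_add (hWR.integrable le_top) (haDW.integrable le_top)]
  have hRW : ∫ ω, W ω * R ω ∂μ = 0 :=
    integral_mul_eq_zero_of_condExp_ae_eq_zero hm' hWm (hWR.integrable le_top)
      (hR.integrable le_top) hRc
  have hbW0 : ∫ ω, b ω * W ω ∂μ = 0 :=
    integral_mul_eq_zero_of_condExp_ae_eq_zero hmΩ hb (hbW.integrable le_top)
      (hW.integrable le_top) hWc
  have haDWβ : ∫ ω, a ω * (D ω * W ω) ∂μ = ∫ ω, a ω * β ω ∂μ := by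
    rw [integral_mul_eq_integral_mul_condExp hmΩ ha (haDW.integrable le_top)
      (hDW.integrable le_top)]
    refine integral_congr_ae ?_
    filter_upwards [hβ] with ω hω
    rw [hω]
  rw [hsplit, hRW, hbW0, haDWβ, zero_add, add_zero]

end PartiallyLinearIV

theorem stmt_9_general
    {Ω 𝓧 : Type*} [MeasurableSpace Ω] [MeasurableSpace 𝓧]
    (μ : Measure Ω) [IsProbabilityMeasure μ]
    (Y T Z : Ω → ℝ) (X : Ω → 𝓧)
    (hY : Measurable Y) (hT : Measurable T) (hZ : Measurable Z) (hX : Measurable X)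
    (hYbdd : ∃ C, ∀ ω, |Y ω| ≤ C) (hTbdd : ∃ C, ∀ ω, |T ω| ≤ C)
    (hZbdd : ∃ C, ∀ ω, |Z ω| ≤ C)
    (θ0 f0 : 𝓧 → ℝ) (hθ0m : Measurable θ0) (hf0m : Measurable f0)
    (hθ0bdd : ∃ C, ∀ x, |θ0 x| ≤ C) (hf0bdd : ∃ C, ∀ x, |f0 x| ≤ C)
    (hIV : μ[fun ω => Y ω - θ0 (X ω) * T ω - f0 (X ω) |
        MeasurableSpace.comap (fun ω => (Z ω, X ω)) inferInstance] =ᵐ[μ] 0)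
    (q0 p0 r0 : 𝓧 → ℝ) (hq0m : Measurable q0) (hp0m : Measurable p0) (hr0m : Measurable r0)
    (hq0bdd : ∃ C, ∀ x, |q0 x| ≤ C) (hp0bdd : ∃ C, ∀ x, |p0 x| ≤ C)
    (hr0bdd : ∃ C, ∀ x, |r0 x| ≤ C)
    (hr0 : (fun ω => r0 (X ω)) =ᵐ[μ] μ[Z | MeasurableSpace.comap X inferInstance])
    (β0 : 𝓧 → ℝ)
    (hβ0 : (fun ω => β0 (X ω)) =ᵐ[μ]
        μ[fun ω => (T ω - p0 (X ω)) * (Z ω - r0 (X ω)) | MeasurableSpace.comap X inferInstance])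
    (hβne : (∫ ω, β0 (X ω) ∂μ) ≠ 0) (θhat : ℝ)
    (hmom : (∫ ω, (Y ω - q0 (X ω) - θhat * (T ω - p0 (X ω))) * (Z ω - r0 (X ω)) ∂μ) = 0) :
    θhat = (∫ ω, θ0 (X ω) * β0 (X ω) ∂μ) / ∫ ω, β0 (X ω) ∂μ := by
  set mX : MeasurableSpace Ω := MeasurableSpace.comap X inferInstance
  set mZX : MeasurableSpace Ω := MeasurableSpace.comap (fun ω => (Z ω, X ω)) inferInstance
  have hXm : Measurable[mX] X := comap_measurable X
  have hZXm : Measurable[mZX] (fun ω => (Z ω, X ω)) := comap_measurable _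
  have hZ' : MemLp Z ⊤ μ := memLp_top_of_abs_le hZ hZbdd
  have hT' : MemLp T ⊤ μ := memLp_top_of_abs_le hT hTbdd
  have hθ0' := memLp_top_comp_of_abs_le (μ := μ) hθ0m hX hθ0bdd
  have hp0' := memLp_top_comp_of_abs_le (μ := μ) hp0m hX hp0bdd
  have hr0' := memLp_top_comp_of_abs_le (μ := μ) hr0m hX hr0bdd
  have hf0' := memLp_top_comp_of_abs_le (μ := μ) hf0m hX hf0bdd
  have hWc : μ[fun ω => Z ω - r0 (X ω)|mX] =ᵐ[μ] 0 :=
    condExp_sub_ae_eq_zero_of_ae_eq_condExp hX.comap_le (hr0m.comp hXm).stronglyMeasurable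
      (hZ'.integrable le_top) (hr0'.integrable le_top) hr0
  have hkey := integral_add_mul_add_mul_eq_integral_mul
    ((measurable_snd.comp hZXm).comap_le) (hZ.prodMk hX).comap_le
    (R := fun ω => Y ω - θ0 (X ω) * T ω - f0 (X ω)) (D := fun ω => T ω - p0 (X ω))
    (W := fun ω => Z ω - r0 (X ω)) (a := fun ω => θ0 (X ω) - θhat)
    (b := fun ω => θ0 (X ω) * p0 (X ω) + f0 (X ω) - q0 (X ω))
    (((memLp_top_of_abs_le hY hYbdd).sub (hT'.mul' hθ0')).sub hf0') (hT'.sub hp0')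
    (hZ'.sub hr0') ((hθ0m.comp hXm).sub measurable_const).stronglyMeasurable
    (hθ0'.sub (memLp_const θhat))
    (((hθ0m.comp hXm).mul (hp0m.comp hXm)).add (hf0m.comp hXm) |>.sub
      (hq0m.comp hXm)).stronglyMeasurable
    (((hp0'.mul' hθ0').add hf0').sub (memLp_top_comp_of_abs_le hq0m hX hq0bdd))
    ((measurable_fst.comp hZXm).sub (hr0m.comp (measurable_snd.comp hZXm))).stronglyMeasurable
    hWc hIV hβ0
  have hβint : Integrable (fun ω => β0 (X ω)) μ := integrable_condExp.congr hβ0.symm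
  have hθβint : Integrable (fun ω => θ0 (X ω) * β0 (X ω)) μ :=
    memLp_one_iff_integrable.1 ((memLp_one_iff_integrable.2 hβint).mul' hθ0')
  have hlinear : ∫ ω, θ0 (X ω) * β0 (X ω) ∂μ - θhat * ∫ ω, β0 (X ω) ∂μ = 0 := by
    rw [← integral_const_mul, ← integral_sub hθβint (hβint.const_mul θhat), ← hmom]
    simp only [sub_mul] at hkey
    convert hkey.symm using 3 with ω
    ring
  field_simp
  linarith

theorem stmt_9
    {Ω 𝓧 : Type*} [MeasurableSpace Ω] [MeasurableSpace 𝓧] [StandardBorelSpace 𝓧]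
    (μ : Measure Ω) [IsProbabilityMeasure μ]
    (Y T Z : Ω → ℝ) (X : Ω → 𝓧)
    (hY : Measurable Y) (hT : Measurable T) (hZ : Measurable Z) (hX : Measurable X)
    (hYbdd : ∃ C, ∀ ω, |Y ω| ≤ C) (hTbdd : ∃ C, ∀ ω, |T ω| ≤ C)
    (hZbdd : ∃ C, ∀ ω, |Z ω| ≤ C)
    (θ0 f0 : 𝓧 → ℝ) (hθ0m : Measurable θ0) (hf0m : Measurable f0)
    (hθ0bdd : ∃ C, ∀ x, |θ0 x| ≤ C) (hf0bdd : ∃ C, ∀ x, |f0 x| ≤ C)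
    (hIV : μ[fun ω => Y ω - θ0 (X ω) * T ω - f0 (X ω) |
        MeasurableSpace.comap (fun ω => (Z ω, X ω)) inferInstance] =ᵐ[μ] 0)
    (q0 p0 r0 : 𝓧 → ℝ) (hq0m : Measurable q0) (hp0m : Measurable p0) (hr0m : Measurable r0)
    (hq0bdd : ∃ C, ∀ x, |q0 x| ≤ C) (hp0bdd : ∃ C, ∀ x, |p0 x| ≤ C)
    (hr0bdd : ∃ C, ∀ x, |r0 x| ≤ C)
    (hq0 : (fun ω => q0 (X ω)) =ᵐ[μ] μ[Y | MeasurableSpace.comap X inferInstance])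
    (hp0 : (fun ω => p0 (X ω)) =ᵐ[μ] μ[T | MeasurableSpace.comap X inferInstance])
    (hr0 : (fun ω => r0 (X ω)) =ᵐ[μ] μ[Z | MeasurableSpace.comap X inferInstance])
    (h0 : ℝ × 𝓧 → ℝ) (hh0m : Measurable h0) (hh0bdd : ∃ C, ∀ zx, |h0 zx| ≤ C)
    (hh0 : (fun ω => h0 (Z ω, X ω)) =ᵐ[μ]
        μ[T | MeasurableSpace.comap (fun ω => (Z ω, X ω)) inferInstance])
    (β0 : 𝓧 → ℝ) (hβ0m : Measurable β0) (hβ0bdd : ∃ C, ∀ x, |β0 x| ≤ C)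
    (hβ0 : (fun ω => β0 (X ω)) =ᵐ[μ]
        μ[fun ω => (T ω - p0 (X ω)) * (Z ω - r0 (X ω)) | MeasurableSpace.comap X inferInstance])
    (V0 : 𝓧 → ℝ) (hV0m : Measurable V0) (hV0bdd : ∃ C, ∀ x, |V0 x| ≤ C)
    (hV0 : (fun ω => V0 (X ω)) =ᵐ[μ]
        μ[fun ω => (h0 (Z ω, X ω) - p0 (X ω)) ^ 2 | MeasurableSpace.comap X inferInstance])
    (hβne : (∫ ω, β0 (X ω) ∂μ) ≠ 0) (θhat : ℝ)
    (hmom : (∫ ω, (Y ω - q0 (X ω) - θhat * (T ω - p0 (X ω))) * (Z ω - r0 (X ω)) ∂μ) = 0) :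
    θhat = (∫ ω, θ0 (X ω) * β0 (X ω) ∂μ) / ∫ ω, β0 (X ω) ∂μ :=
  stmt_9_general μ Y T Z X hY hT hZ hX hYbdd hTbdd hZbdd θ0 f0 hθ0m hf0m hθ0bdd hf0bdd hIV q0 p0 r0
    hq0m hp0m hr0m hq0bdd hp0bdd hr0bdd hr0 β0 hβ0 hβne θhat hmom
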